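/- Let m be a flow measure on a tree rooted at infinity. The following are equivalent: (i) m is locally doubling; (ii) there exists a constant c > 1 such that m(x) ≤ c·m(y) for all x ∈ V and all y ∈ s(x), and m(x) ≥ (c/(c−1))·m(y) for all x ∈ V with q(x) ≥ 2 and all y ∈ s(x). -/

import Mathlib

open scoped ENNReal NNReal BigOperators

universe u

namespace FlowPaper

/-- A tree rooted at infinity: vertex set `V`, level function `lvl`, predecessor `pred`. -/
structure Tree (V : Type u) where
  lvl : V → ℤ
  pred : V → V
  lvl_pred : ∀ x, lvl (pred x) = lvl x + 1
  sons_fin : ∀ x, {y : V | pred y = x}.Finite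
  sons_ne : ∀ x, ∃ y, pred y = x
  conn : ∀ x y, ∃ k l : ℕ, pred^[k] x = pred^[l] y

variable {V : Type u}

namespace Tree

/-- The (finite) set of sons of a vertex. -/
noncomputable def sons (T : Tree V) (x : V) : Finset V := (T.sons_fin x).toFinset

/-- The number of sons `q(x)` of a vertex. -/
noncomputable def deg (T : Tree V) (x : V) : ℕ := (T.sons x).card

/-- The partial order: `x ≤ y` iff `y` is an iterated predecessor of `x`. -/
def Le (T : Tree V) (x y : V) : Prop := ∃ k : ℕ, T.pred^[k] x = y

/-- The geodesic distance: the least `k + l` with `p^[k] x = p^[l] y`. -/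
noncomputable def dist (T : Tree V) (x y : V) : ℕ :=
  sInf {n : ℕ | ∃ k l : ℕ, k + l = n ∧ T.pred^[k] x = T.pred^[l] y}

/-- The closed ball of radius `r` about `x`. -/
def ball (T : Tree V) (x : V) (r : ℕ) : Set V := {y | T.dist x y ≤ r}

/-- The sphere of radius `r` about `x`. -/
def sphere (T : Tree V) (x : V) (r : ℕ) : Set V := {y | T.dist x y = r}

/-- Adjacency: `x ~ y` iff one is the predecessor of the other. -/
def Adj (T : Tree V) (x y : V) : Prop := T.pred x = y ∨ T.pred y = x

/-- The trapezoid `R_{h1}^{h2}(x0)`. -/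
def trap (T : Tree V) (x0 : V) (h1 h2 : ℕ) : Set V :=
  {x | T.Le x x0 ∧ T.lvl x0 - h2 < T.lvl x ∧ T.lvl x ≤ T.lvl x0 - h1}

end Tree

/-- The measure of a subset of vertices. -/
noncomputable def mst (m : V → ℝ≥0∞) (A : Set V) : ℝ≥0∞ := ∑' x : A, m x

/-- `m` is a flow measure: positive, finite at each vertex, and the value at a
vertex is the sum of the values at its sons. -/
structure IsFlow (T : Tree V) (m : V → ℝ≥0∞) : Prop where
  pos : ∀ x, 0 < m x
  fin : ∀ x, m x < ⊤
  flow : ∀ x, m x = ∑ y ∈ T.sons x, m y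

/-- `m` is locally doubling. -/
def LocDoubling (T : Tree V) (m : V → ℝ≥0∞) : Prop :=
  ∀ r : ℕ, 0 < r → ∃ C : ℝ, 1 < C ∧
    ∀ x : V, mst m (T.ball x (2 * r)) ≤ ENNReal.ofReal C * mst m (T.ball x r)

/-- `m` is (globally) doubling. -/
def Doubling (T : Tree V) (m : V → ℝ≥0∞) : Prop :=
  ∃ C : ℝ, 1 < C ∧ ∀ (r : ℕ) (x : V), 0 < r →
    mst m (T.ball x (2 * r)) ≤ ENNReal.ofReal C * mst m (T.ball x r)

/-- Admissible trapezoid (with respect to the parameter `β`): a singleton, or a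
trapezoid `R_{h1}^{h2}(x)` with `2 ≤ h2 / h1 ≤ β`. -/
def IsAdmissible (T : Tree V) (β : ℝ) (R : Set V) : Prop :=
  (∃ x : V, R = {x}) ∨
  ∃ (x : V) (h1 h2 : ℕ), 1 ≤ h1 ∧ 2 * h1 ≤ h2 ∧ (h2 : ℝ) ≤ β * h1 ∧ R = T.trap x h1 h2

/-- `∫_A |f| dm`. -/
noncomputable def intNN (m : V → ℝ≥0∞) (A : Set V) (f : V → ℂ) : ℝ≥0∞ :=
  ∑' x : A, (‖f x‖₊ : ℝ≥0∞) * m x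

/-- `∫_A f dm`. -/
noncomputable def intC (m : V → ℝ≥0∞) (A : Set V) (f : V → ℂ) : ℂ :=
  ∑' x : A, f x * ((m x).toReal : ℂ)

/-- The average `f_A = (1/m(A)) ∫_A f dm`. -/
noncomputable def avg (m : V → ℝ≥0∞) (A : Set V) (f : V → ℂ) : ℂ :=
  intC m A f / (((mst m A).toReal : ℝ) : ℂ)

/-- `L^p` norm of an `ℝ≥0∞`-valued function, `0 < p < ∞`. -/
noncomputable def lpNormE (m : V → ℝ≥0∞) (p : ℝ) (g : V → ℝ≥0∞) : ℝ≥0∞ :=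
  (∑' x : V, g x ^ p * m x) ^ (1 / p)

/-- `L^p` norm, `0 < p < ∞`. -/
noncomputable def lpNorm (m : V → ℝ≥0∞) (p : ℝ) (f : V → ℂ) : ℝ≥0∞ :=
  lpNormE m p (fun x => (‖f x‖₊ : ℝ≥0∞))

/-- `L^∞` norm. -/
noncomputable def linfNorm (f : V → ℂ) : ℝ≥0∞ := ⨆ x : V, (‖f x‖₊ : ℝ≥0∞)

/-- The Hardy–Littlewood maximal function associated with admissible trapezoids. -/
noncomputable def maximal (T : Tree V) (β : ℝ) (m : V → ℝ≥0∞) (f : V → ℂ) (x : V) : ℝ≥0∞ :=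
  ⨆ (R : Set V) (_ : IsAdmissible T β R ∧ x ∈ R), (mst m R)⁻¹ * intNN m R f

/-- The `BMO_q` seminorm. -/
noncomputable def oscNorm (T : Tree V) (β : ℝ) (m : V → ℝ≥0∞) (q : ℝ) (f : V → ℂ) : ℝ≥0∞ :=
  ⨆ (R : Set V) (_ : IsAdmissible T β R),
    ((mst m R)⁻¹ * ∑' x : R, (‖f x - avg m R f‖₊ : ℝ≥0∞) ^ q * m x) ^ (1 / q)

/-- The sharp maximal function. -/
noncomputable def sharpMaximal (T : Tree V) (β : ℝ) (m : V → ℝ≥0∞) (f : V → ℂ) (x : V) :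
    ℝ≥0∞ :=
  ⨆ (R : Set V) (_ : IsAdmissible T β R ∧ x ∈ R),
    (mst m R)⁻¹ * ∑' y : R, (‖f y - avg m R f‖₊ : ℝ≥0∞) * m y

/-- A `(1,p)`-atom, `1 < p < ∞`. -/
def IsAtomP (T : Tree V) (β : ℝ) (m : V → ℝ≥0∞) (p : ℝ) (a : V → ℂ) : Prop :=
  ∃ R : Set V, IsAdmissible T β R ∧ (∀ x ∉ R, a x = 0) ∧
    lpNorm m p a ≤ (mst m R) ^ (1 / p - 1) ∧ intC m R a = 0

/-- A `(1,∞)`-atom. -/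
def IsAtomInf (T : Tree V) (β : ℝ) (m : V → ℝ≥0∞) (a : V → ℂ) : Prop :=
  ∃ R : Set V, IsAdmissible T β R ∧ (∀ x ∉ R, a x = 0) ∧
    linfNorm a ≤ (mst m R)⁻¹ ∧ intC m R a = 0

/-- An atomic decomposition `f = Σ_j λ_j a_j` converging in `L¹(m)`. -/
def IsDecomp (m : V → ℝ≥0∞) (atom : (V → ℂ) → Prop) (f : V → ℂ)
    (lam : ℕ → ℂ) (a : ℕ → V → ℂ) : Prop :=
  (∀ j, atom (a j)) ∧ Summable (fun j => ‖lam j‖) ∧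
  Filter.Tendsto
    (fun N => lpNorm m 1 (fun x => f x - ∑ j ∈ Finset.range N, lam j * a j x))
    Filter.atTop (nhds (0 : ℝ≥0∞))

/-- The atomic Hardy norm associated with the given class of atoms. -/
noncomputable def hNorm (m : V → ℝ≥0∞) (atom : (V → ℂ) → Prop) (f : V → ℂ) : ℝ≥0∞ :=
  ⨅ (d : {la : (ℕ → ℂ) × (ℕ → V → ℂ) // IsDecomp m atom f la.1 la.2}),
    ENNReal.ofReal (∑' j, ‖d.1.1 j‖)

/-- A (finite) geodesic: pairwise distinct vertices, consecutive ones adjacent. -/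
def IsGeodesic (T : Tree V) (l : List V) : Prop := l.Nodup ∧ l.Chain' T.Adj

/-- The number of vertices with at least two sons along a geodesic. -/
noncomputable def branchCount (T : Tree V) (l : List V) : ℕ :=
  List.countP (fun y => decide (2 ≤ T.deg y)) l

/-- The lower half-ball `B_r^-(x0)`. -/
def lowerBall (T : Tree V) (x0 : V) (r : ℕ) : Set V := {x | T.Le x x0 ∧ T.dist x x0 ≤ r}

/-- The boundary `∂A` of a set of vertices. -/
def bdry (T : Tree V) (A : Set V) : Set V := {x ∈ A | ∃ y ∉ A, T.Adj y x}

/-- Trapezoids as labelled data: a singleton, or the data `(x, h1, h2)`. -/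
inductive TrapZ (V : Type u) where
  | single (x : V)
  | tz (x : V) (h1 h2 : ℕ)

namespace TrapZ

/-- The vertex set of a labelled trapezoid. -/
def toSet (T : Tree V) : TrapZ V → Set V
  | single x => {x}
  | tz x h1 h2 => T.trap x h1 h2

/-- Admissibility of a labelled trapezoid. -/
def Adm (β : ℝ) : TrapZ V → Prop
  | single _ => True
  | tz _ h1 h2 => 1 ≤ h1 ∧ 2 * h1 ≤ h2 ∧ (h2 : ℝ) ≤ β * h1

/-- The root of a labelled trapezoid. -/
def root : TrapZ V → V
  | single x => x
  | tz x _ _ => x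

end TrapZ

/-- One step of the decomposition algorithm: the family `ℱ(R,1)`. -/
def children (T : Tree V) : TrapZ V → Set (TrapZ V)
  | .single x => {.single x}
  | .tz x h1 h2 =>
    if h1 = 1 ∧ h2 = 2 then {Q | ∃ y ∈ T.sons x, Q = .single y}
    else if (h1 = 1 ∧ h2 = 3) ∨ 4 * h1 ≤ h2 then {.tz x h1 (2 * h1), .tz x (2 * h1) h2}
    else {Q | ∃ y ∈ T.sons x, Q = .tz y (h1 - 1) (h2 - 1)}

/-- `R'` is an output of the expansion algorithm applied to `R`. -/
def IsExpansion (T : Tree V) : TrapZ V → TrapZ V → Prop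
  | .single x, R' => R' = .tz (T.pred x) 1 2
  | .tz x h1 h2, R' =>
    if h1 = 1 ∧ h2 = 2 then R' = .tz (T.pred x) 1 3
    else if 3 * h1 ≤ h2 then R' = .tz (T.pred x) (h1 + 1) (h2 + 1)
    else R' = .tz x h1 (2 * h2) ∨ R' = .tz x (h1 / 2) h2

/-- The dyadic maximal function associated with a family `D` of partitions. -/
noncomputable def dyadicMaximal (m : V → ℝ≥0∞) (D : ℤ → Set (Set V)) (f : V → ℂ) (x : V) :
    ℝ≥0∞ :=
  ⨆ (R : Set V) (_ : (∃ j, R ∈ D j) ∧ x ∈ R), (mst m R)⁻¹ * intNN m R f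

/-- A dyadic family of partitions of `V` into admissible trapezoids. -/
def IsDyadicFamily (T : Tree V) (β : ℝ) (m : V → ℝ≥0∞) (c Ct : ℝ)
    (D : ℤ → Set (Set V)) : Prop :=
  (∀ j, (∀ R ∈ D j, IsAdmissible T β R) ∧ (D j).Pairwise Disjoint ∧ ⋃₀ (D j) = Set.univ) ∧
  (∀ j k : ℤ, j < k → ∀ R ∈ D j, ∀ R' ∈ D k, R ⊆ R' ∨ R ∩ R' = ∅) ∧
  (∀ j, ∀ R ∈ D j, ∃! R', R' ∈ D (j + 1) ∧ R ⊆ R') ∧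
  (∀ j, ∀ R ∈ D j, ∀ R' ∈ D (j + 1), R ⊆ R' → mst m R' ≤ ENNReal.ofReal Ct * mst m R) ∧
  (∀ j, ∀ R ∈ D j, ∃ F : Finset (Set V), ↑F ⊆ D (j - 1) ∧ (F.card : ℝ) ≤ c ∧ R = ⋃₀ ↑F) ∧
  (∀ x : V, ∃ k : ℤ, ∀ j ≤ k, {x} ∈ D j)

end FlowPaper

namespace FlowPaper


section Statement1Aux

variable {V : Type u}

lemma mst_mono (m : V → ℝ≥0∞) {A B : Set V} (h : A ⊆ B) : mst m A ≤ mst m B := by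
  rw [mst, mst, tsum_subtype, tsum_subtype]
  exact ENNReal.tsum_le_tsum fun x =>
    Set.indicator_le_indicator_of_subset h (fun _ => zero_le) x

lemma mst_singleton (m : V → ℝ≥0∞) (x : V) : mst m {x} = m x := tsum_singleton x m

lemma mst_empty (m : V → ℝ≥0∞) : mst m (∅ : Set V) = 0 := by
  rw [mst]; exact tsum_empty

lemma mst_union_le (m : V → ℝ≥0∞) (A B : Set V) : mst m (A ∪ B) ≤ mst m A + mst m B := by
  rw [mst, mst, mst, tsum_subtype, tsum_subtype, tsum_subtype, ← ENNReal.tsum_add]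
  refine ENNReal.tsum_le_tsum fun x => ?_
  by_cases hA : x ∈ A <;> by_cases hB : x ∈ B <;>
    simp [Set.indicator_apply, hA, hB]

lemma mst_biUnion_le {ι : Type*} (m : V → ℝ≥0∞) (F : Finset ι) (A : ι → Set V) :
    mst m (⋃ i ∈ F, A i) ≤ ∑ i ∈ F, mst m (A i) := by
  classical
  induction F using Finset.induction_on with
  | empty => simp [mst_empty]
  | @insert a s hnot ih =>
    rw [Finset.set_biUnion_insert, Finset.sum_insert hnot]
    exact le_trans (mst_union_le m _ _) (add_le_add_right ih _)

lemma mem_sons_iff (T : Tree V) {x y : V} : y ∈ T.sons x ↔ T.pred y = x := by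
  simp [Tree.sons, Set.Finite.mem_toFinset]

lemma mst_Dset_le (T : Tree V) (m : V → ℝ≥0∞) (hm : IsFlow T m) :
    ∀ (j : ℕ) (x : V), mst m {v | T.pred^[j] v = x} ≤ m x := by
  intro j
  induction j with
  | zero =>
    intro x
    simp only [Function.iterate_zero, id_eq]
    rw [show {v : V | v = x} = ({x} : Set V) from Set.setOf_eq_eq_singleton,
      mst_singleton]
  | succ j ih =>
    intro x
    have hset : {v | T.pred^[j+1] v = x} = ⋃ y ∈ T.sons x, {v | T.pred^[j] v = y} := by
      ext v
      simp only [Set.mem_setOf_eq, Set.mem_iUnion, mem_sons_iff, exists_prop]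
      rw [Function.iterate_succ_apply']
      constructor
      · intro h; exact ⟨T.pred^[j] v, h, rfl⟩
      · rintro ⟨y, hy, h⟩; rw [h]; exact hy
    rw [hset]
    calc mst m (⋃ y ∈ T.sons x, {v | T.pred^[j] v = y})
        ≤ ∑ y ∈ T.sons x, mst m {v | T.pred^[j] v = y} := mst_biUnion_le m _ _
      _ ≤ ∑ y ∈ T.sons x, m y := Finset.sum_le_sum fun y _ => ih y
      _ = m x := (hm.flow x).symm

lemma dist_le_of (T : Tree V) {x y : V} {k l : ℕ} (h : T.pred^[k] x = T.pred^[l] y) :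
    T.dist x y ≤ k + l :=
  Nat.sInf_le ⟨k, l, rfl, h⟩

lemma mem_ball_self (T : Tree V) (x : V) (r : ℕ) : x ∈ T.ball x r := by
  have : T.dist x x ≤ 0 + 0 := dist_le_of T (rfl : T.pred^[0] x = T.pred^[0] x)
  simpa [Tree.ball] using le_trans this (Nat.zero_le r)

lemma self_le_mst_ball (T : Tree V) (m : V → ℝ≥0∞) (x : V) (r : ℕ) :
    m x ≤ mst m (T.ball x r) := by
  rw [← mst_singleton m x]
  exact mst_mono m (Set.singleton_subset_iff.mpr (mem_ball_self T x r))

lemma ball_cover (T : Tree V) (x : V) (n : ℕ) :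
    T.ball x n ⊆ ⋃ k ∈ Finset.range (n+1), ⋃ j ∈ Finset.range (n+1),
      {v | T.pred^[j] v = T.pred^[k] x} := by
  intro v hv
  have hne : {n' : ℕ | ∃ k l : ℕ, k + l = n' ∧ T.pred^[k] x = T.pred^[l] v}.Nonempty := by
    obtain ⟨k, l, h⟩ := T.conn x v
    exact ⟨k + l, k, l, rfl, h⟩
  obtain ⟨k, l, hkl, heq⟩ := Nat.sInf_mem hne
  have hv' : T.dist x v ≤ n := hv
  rw [Tree.dist, ← hkl] at hv'
  simp only [Set.mem_iUnion, Finset.mem_range, exists_prop]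
  exact ⟨k, by omega, l, by omega, heq.symm⟩

lemma mst_ball_le (T : Tree V) (m : V → ℝ≥0∞) (hm : IsFlow T m) (x : V) (n : ℕ) :
    mst m (T.ball x n) ≤ ∑ k ∈ Finset.range (n+1), ((n:ℝ≥0∞)+1) * m (T.pred^[k] x) := by
  calc mst m (T.ball x n)
      ≤ mst m (⋃ k ∈ Finset.range (n+1), ⋃ j ∈ Finset.range (n+1),
          {v | T.pred^[j] v = T.pred^[k] x}) := mst_mono m (ball_cover T x n)
    _ ≤ ∑ k ∈ Finset.range (n+1), mst m (⋃ j ∈ Finset.range (n+1),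
          {v | T.pred^[j] v = T.pred^[k] x}) := mst_biUnion_le m _ _
    _ ≤ ∑ k ∈ Finset.range (n+1), ∑ j ∈ Finset.range (n+1),
          mst m {v | T.pred^[j] v = T.pred^[k] x} :=
        Finset.sum_le_sum fun k _ => mst_biUnion_le m _ _
    _ ≤ ∑ k ∈ Finset.range (n+1), ∑ j ∈ Finset.range (n+1), m (T.pred^[k] x) :=
        Finset.sum_le_sum fun k _ => Finset.sum_le_sum fun j _ => mst_Dset_le T m hm j _
    _ = ∑ k ∈ Finset.range (n+1), ((n:ℝ≥0∞)+1) * m (T.pred^[k] x) := by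
        refine Finset.sum_congr rfl fun k _ => ?_
        rw [Finset.sum_const, Finset.card_range, nsmul_eq_mul]
        push_cast
        ring

lemma m_son_le (T : Tree V) (m : V → ℝ≥0∞) (hm : IsFlow T m) {x y : V}
    (h : T.pred y = x) : m y ≤ m x := by
  rw [hm.flow x]
  exact Finset.single_le_sum (fun i _ => zero_le) ((mem_sons_iff T).mpr h)

lemma key_upper (T : Tree V) (m : V → ℝ≥0∞) (hm : IsFlow T m) {C : ℝ}
    (hC : ∀ x : V, mst m (T.ball x (2*2)) ≤ ENNReal.ofReal C * mst m (T.ball x 2))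
    (hC0 : 0 ≤ C) :
    ∀ x y : V, T.pred y = x → m x ≤ ENNReal.ofReal (9 * C) * m y := by
  intro x y hy
  obtain ⟨w, hw⟩ := T.sons_ne y
  obtain ⟨z, hz⟩ := T.sons_ne w
  have hz1 : T.pred^[1] z = w := by simp [hz]
  have hz2 : T.pred^[2] z = y := by
    rw [Function.iterate_succ_apply', hz1, hw]
  have hz3 : T.pred^[3] z = x := by
    rw [Function.iterate_succ_apply', hz2, hy]
  have hxball : x ∈ T.ball z (2*2) := by
    have : T.dist z x ≤ 3 + 0 := dist_le_of T (show T.pred^[3] z = T.pred^[0] x by simp [hz3])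
    show T.dist z x ≤ 2*2
    omega
  have hmz : m z ≤ m y := le_trans (m_son_le T m hm hz) (m_son_le T m hm hw)
  have hmw : m w ≤ m y := m_son_le T m hm hw
  have hball2 : mst m (T.ball z 2) ≤ 9 * m y := by
    calc mst m (T.ball z 2)
        ≤ ∑ k ∈ Finset.range 3, ((2:ℝ≥0∞)+1) * m (T.pred^[k] z) := by
          have := mst_ball_le T m hm z 2
          simpa using this
      _ = 3 * m z + 3 * m w + 3 * m y := by
          rw [Finset.sum_range_succ, Finset.sum_range_succ, Finset.sum_range_one, hz1, hz2,
            Function.iterate_zero_apply]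
          norm_num
      _ ≤ 3 * m y + 3 * m y + 3 * m y := by
          gcongr
      _ = 9 * m y := by ring
  calc m x ≤ mst m (T.ball z (2*2)) := by
        rw [← mst_singleton m x]
        exact mst_mono m (Set.singleton_subset_iff.mpr hxball)
    _ ≤ ENNReal.ofReal C * mst m (T.ball z 2) := hC z
    _ ≤ ENNReal.ofReal C * (9 * m y) := by gcongr
    _ = ENNReal.ofReal (9 * C) * m y := by
        rw [ENNReal.ofReal_mul (by norm_num : (0:ℝ) ≤ 9)]
        rw [show ENNReal.ofReal 9 = (9:ℝ≥0∞) by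
          rw [show (9:ℝ) = ((9:ℕ):ℝ) by norm_num, ENNReal.ofReal_natCast]; norm_num]
        ring

lemma m_pred_pow_le (T : Tree V) (m : V → ℝ≥0∞) {c : ℝ}
    (hca : ∀ x : V, ∀ y ∈ T.sons x, m x ≤ ENNReal.ofReal c * m y) (x : V) :
    ∀ k : ℕ, m (T.pred^[k] x) ≤ (ENNReal.ofReal c)^k * m x := by
  intro k
  induction k with
  | zero => simp
  | succ k ih =>
    have hmem : T.pred^[k] x ∈ T.sons (T.pred (T.pred^[k] x)) := (mem_sons_iff T).mpr rfl
    have h1 : m (T.pred^[k+1] x) ≤ ENNReal.ofReal c * m (T.pred^[k] x) := by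
      rw [Function.iterate_succ_apply']
      exact hca _ _ hmem
    calc m (T.pred^[k+1] x) ≤ ENNReal.ofReal c * m (T.pred^[k] x) := h1
      _ ≤ ENNReal.ofReal c * ((ENNReal.ofReal c)^k * m x) := by gcongr
      _ = (ENNReal.ofReal c)^(k+1) * m x := by ring

end Statement1Aux

/-- characterization of locally doubling flow measures. -/
theorem statement1 {V : Type u} [Countable V] [Infinite V] (T : Tree V)
    (m : V → ℝ≥0∞) (hm : IsFlow T m) :
    LocDoubling T m ↔
      ∃ c : ℝ, 1 < c ∧
        (∀ x : V, ∀ y ∈ T.sons x, m x ≤ ENNReal.ofReal c * m y) ∧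
        (∀ x : V, 2 ≤ T.deg x → ∀ y ∈ T.sons x,
          ENNReal.ofReal (c / (c - 1)) * m y ≤ m x) := by
  constructor
  · intro hLD
    obtain ⟨C, hC1, hC⟩ := hLD 2 (by norm_num)
    have hC0 : (0:ℝ) ≤ C := by linarith
    have key := key_upper T m hm hC hC0
    set c : ℝ := 9 * C with hc
    have hc1 : 1 < c := by rw [hc]; nlinarith
    refine ⟨c, hc1, fun x y hy => key x y ((mem_sons_iff T).mp hy), ?_⟩
    intro x hdeg y hy
    classical
    have hcard : 2 ≤ (T.sons x).card := hdeg
    obtain ⟨y', hy', hyne⟩ := Finset.exists_mem_ne hcard y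
    have h1 : m x ≤ ENNReal.ofReal c * m y' := key x y' ((mem_sons_iff T).mp hy')
    have h2 : m y + m y' ≤ m x := by
      rw [hm.flow x]
      have hsub : ({y, y'} : Finset V) ⊆ T.sons x := by
        intro t ht
        rcases Finset.mem_insert.mp ht with rfl | ht
        · exact hy
        · rw [Finset.mem_singleton.mp ht]; exact hy'
      calc m y + m y' = ∑ t ∈ ({y, y'} : Finset V), m t :=
            (Finset.sum_pair (Ne.symm hyne)).symm
        _ ≤ ∑ t ∈ T.sons x, m t :=
            Finset.sum_le_sum_of_subset hsub
    have hax : m x ≠ ⊤ := (hm.fin x).ne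
    have hay : m y ≠ ⊤ := (hm.fin y).ne
    have hay' : m y' ≠ ⊤ := (hm.fin y').ne
    set a := (m x).toReal with ha
    set b := (m y).toReal with hb
    set b' := (m y').toReal with hb'
    have h1' : a ≤ c * b' := by
      have := ENNReal.toReal_mono (ENNReal.mul_ne_top ENNReal.ofReal_ne_top hay') h1
      rwa [ENNReal.toReal_mul, ENNReal.toReal_ofReal (by linarith)] at this
    have h2' : b + b' ≤ a := by
      have := ENNReal.toReal_mono hax h2
      rwa [ENNReal.toReal_add hay hay'] at this
    have hgoal : (c / (c - 1)) * b ≤ a := by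
      rw [div_mul_eq_mul_div, div_le_iff₀ (by linarith : (0:ℝ) < c - 1)]
      nlinarith
    calc ENNReal.ofReal (c / (c - 1)) * m y
        = ENNReal.ofReal (c / (c - 1)) * ENNReal.ofReal b := by
          rw [hb, ENNReal.ofReal_toReal hay]
      _ = ENNReal.ofReal ((c / (c - 1)) * b) :=
          (ENNReal.ofReal_mul (div_nonneg (by linarith) (by linarith))).symm
      _ ≤ ENNReal.ofReal a := ENNReal.ofReal_le_ofReal hgoal
      _ = m x := by rw [ha, ENNReal.ofReal_toReal hax]
  · rintro ⟨c, hc1, hca, -⟩ r hr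
    have hc0 : (0:ℝ) ≤ c := by linarith
    refine ⟨((2*r+1 : ℕ) : ℝ)^2 * c^(2*r), ?_, ?_⟩
    · have h1 : (1:ℝ) ≤ c^(2*r) := one_le_pow₀ hc1.le
      have h3 : (3:ℝ) ≤ ((2*r+1 : ℕ) : ℝ) := by
        have : 3 ≤ 2*r+1 := by omega
        exact_mod_cast this
      nlinarith
    · intro x
      have hone : (1:ℝ≥0∞) ≤ ENNReal.ofReal c := by
        rw [← ENNReal.ofReal_one]
        exact ENNReal.ofReal_le_ofReal hc1.le
      calc mst m (T.ball x (2*r))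
          ≤ ∑ k ∈ Finset.range (2*r+1), (((2*r:ℕ):ℝ≥0∞)+1) * m (T.pred^[k] x) :=
            mst_ball_le T m hm x (2*r)
        _ ≤ ∑ k ∈ Finset.range (2*r+1),
              (((2*r:ℕ):ℝ≥0∞)+1) * ((ENNReal.ofReal c)^(2*r) * m x) := by
            refine Finset.sum_le_sum fun k hk => ?_
            have hk' : k ≤ 2*r := by
              have := Finset.mem_range.mp hk; omega
            have := m_pred_pow_le T m hca x k
            refine mul_le_mul_right (le_trans this ?_) _
            exact mul_le_mul_left (pow_le_pow_right₀ hone hk') _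
        _ = ((2*r+1:ℕ):ℝ≥0∞) * (((2*r+1:ℕ):ℝ≥0∞)) * ((ENNReal.ofReal c)^(2*r) * m x) := by
            rw [Finset.sum_const, Finset.card_range, nsmul_eq_mul]
            push_cast
            ring
        _ ≤ ENNReal.ofReal (((2*r+1 : ℕ) : ℝ)^2 * c^(2*r)) * mst m (T.ball x r) := by
            rw [ENNReal.ofReal_mul (by positivity), ENNReal.ofReal_pow (by positivity),
              ENNReal.ofReal_natCast, ENNReal.ofReal_pow hc0]
            have hx : m x ≤ mst m (T.ball x r) := self_le_mst_ball T m x r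
            calc ((2*r+1:ℕ):ℝ≥0∞) * (((2*r+1:ℕ):ℝ≥0∞)) * ((ENNReal.ofReal c)^(2*r) * m x)
                ≤ ((2*r+1:ℕ):ℝ≥0∞) * (((2*r+1:ℕ):ℝ≥0∞)) *
                    ((ENNReal.ofReal c)^(2*r) * mst m (T.ball x r)) := by gcongr
              _ = ((2*r+1:ℕ):ℝ≥0∞)^2 * (ENNReal.ofReal c)^(2*r) * mst m (T.ball x r) := by
                  ring


end FlowPaper
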